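/- arXiv:1303.3949 — 5 statements merged into one kernel-verified Lean document; each statement's English description precedes it below -/
import Mathlib

section
/- Let Γ ≤ Λ be countable groups with Γ commensurated by Λ. The relative profinite completion Λ//Γ (the closure of τ(Λ) in Sym(Λ/Γ) with the topology of pointwise convergence) is discrete if and only if there exists a finite index subgroup Γ₀ ≤ Γ with Γ₀ normal in Λ. -/
/-!
The stabiliser in `Λ` of the coset `gΓ` is `gΓg⁻¹`, so the kernel of `τ` is the normal core of
`Γ`, and the right-hand side says exactly that this core has finite index in `Γ`. Identity
neighbourhoods in `Sym(Λ/Γ)` contain pointwise stabilisers of finite sets. If `Λ//Γ` is discrete,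
one of them meets `τ(Λ)` only in `1`, so the core contains an intersection of finitely many
conjugates of `Γ`, which has finite index in `Γ` because `Γ` is commensurated. Conversely, if the
core has finite index in `Γ`, the open stabiliser of the coset `Γ` meets `Λ//Γ` inside the closure
of the finite set `τ(Γ)`; a Hausdorff group with a finite identity neighbourhood is discrete.
-/

open scoped Pointwise

/-- The topology of pointwise convergence on the symmetric group of a (discrete) set `X`,
induced from the product topology on `(X → X) × (X → X)` via `g ↦ (g, g⁻¹)`. -/
noncomputable def permPointwiseTopology (X : Type*) : TopologicalSpace (Equiv.Perm X) :=
  letI : TopologicalSpace X := ⊥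
  TopologicalSpace.induced
    (fun g : Equiv.Perm X => ((g : X → X), (g.symm : X → X))) inferInstance

open Topology Equiv

section PointwiseTopology

attribute [local instance] permPointwiseTopology

variable {X : Type*} [TopologicalSpace X] [DiscreteTopology X]

theorem isEmbedding_perm_coeFn_coeFn_symm :
    IsEmbedding fun g : Perm X => ((g : X → X), (g.symm : X → X)) := by
  refine ⟨⟨?_⟩, fun g h hgh => Equiv.coe_fn_injective (congrArg Prod.fst hgh)⟩
  rw [DiscreteTopology.eq_bot (α := X)]
  rfl

theorem continuous_perm_apply (x : X) : Continuous fun g : Perm X => g x :=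
  (continuous_apply x).comp (continuous_fst.comp isEmbedding_perm_coeFn_coeFn_symm.continuous)

theorem continuous_perm_symm_apply (x : X) : Continuous fun g : Perm X => g.symm x :=
  (continuous_apply x).comp (continuous_snd.comp isEmbedding_perm_coeFn_coeFn_symm.continuous)

theorem continuous_perm_eval : Continuous fun p : Perm X × X => p.1 p.2 :=
  continuous_prod_of_discrete_right.mpr continuous_perm_apply

theorem continuous_perm_symm_eval : Continuous fun p : Perm X × X => p.1.symm p.2 :=
  continuous_prod_of_discrete_right.mpr continuous_perm_symm_apply

theorem isTopologicalGroup_perm : IsTopologicalGroup (Perm X) where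
  continuous_mul := by
    refine isEmbedding_perm_coeFn_coeFn_symm.isInducing.continuous_iff.mpr
      (.prodMk (continuous_pi fun x => ?_) (continuous_pi fun x => ?_))
    · exact continuous_perm_eval.comp <|
        continuous_fst.prodMk ((continuous_perm_apply x).comp continuous_snd)
    · exact continuous_perm_symm_eval.comp <|
        continuous_snd.prodMk ((continuous_perm_symm_apply x).comp continuous_fst)
  continuous_inv :=
    isEmbedding_perm_coeFn_coeFn_symm.isInducing.continuous_iff.mpr <|
      continuous_swap.comp isEmbedding_perm_coeFn_coeFn_symm.continuous

theorem t2Space_perm : T2Space (Perm X) :=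
  isEmbedding_perm_coeFn_coeFn_symm.t2Space

theorem isOpen_setOf_perm_apply_eq (x y : X) : IsOpen {g : Perm X | g x = y} :=
  (isOpen_discrete {y}).preimage (continuous_perm_apply x)

theorem exists_finset_setOf_forall_apply_eq_subset {U : Set (Perm X)} (hU : U ∈ 𝓝 1) :
    ∃ F : Finset X, {g : Perm X | ∀ x ∈ F, g x = x} ⊆ U := by
  rw [isEmbedding_perm_coeFn_coeFn_symm.isInducing.nhds_eq_comap, nhds_prod_eq, nhds_pi, nhds_pi,
    nhds_discrete] at hU
  obtain ⟨t, ht, htU⟩ := Filter.mem_comap.mp hU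
  obtain ⟨t₁, ht₁, t₂, ht₂, hsub⟩ := Filter.mem_prod_iff.mp ht
  obtain ⟨I₁, hI₁, h₁⟩ := Filter.mem_pi_pure.mp ht₁
  obtain ⟨I₂, hI₂, h₂⟩ := Filter.mem_pi_pure.mp ht₂
  refine ⟨(hI₁.union hI₂).toFinset, fun g hg => htU (hsub ⟨h₁ _ fun x hx => ?_, h₂ _ fun x hx => ?_⟩)⟩
  · exact hg x (by simp [hx])
  · exact g.symm_apply_eq.mpr (hg x (by simp [hx])).symm

theorem exists_finset_forall_apply_eq_imp_eq_one {S : Set (Perm X)} [DiscreteTopology S]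
    (h1 : 1 ∈ S) : ∃ F : Finset X, ∀ g ∈ S, (∀ x ∈ F, g x = x) → g = 1 := by
  obtain ⟨U, hU, hU1⟩ := isOpen_induced_iff.mp (isOpen_discrete {(⟨1, h1⟩ : S)})
  have hU1' : (1 : Perm X) ∈ U := (Set.ext_iff.mp hU1 ⟨1, h1⟩).mpr rfl
  obtain ⟨F, hF⟩ := exists_finset_setOf_forall_apply_eq_subset (hU.mem_nhds hU1')
  exact ⟨F, fun g hg hgF => congrArg Subtype.val <| (Set.ext_iff.mp hU1 ⟨g, hg⟩).mp (hF hgF)⟩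

end PointwiseTopology

section RelIndex

variable {G : Type*} [Group G]

theorem Subgroup.exists_normal_le_relIndex_ne_zero_iff (H : Subgroup G) :
    (∃ N : Subgroup G, N ≤ H ∧ N.relIndex H ≠ 0 ∧ N.Normal) ↔ H.normalCore.relIndex H ≠ 0 := by
  refine ⟨fun ⟨N, hNH, hN, _⟩ => ?_, fun h => ⟨H.normalCore, H.normalCore_le, h, inferInstance⟩⟩
  exact ne_zero_of_dvd_ne_zero hN <|
    Subgroup.relIndex_dvd_of_le_left H (Subgroup.normal_le_normalCore.mpr hNH)

theorem relIndex_stabilizer_ne_zero_of_commensurable {Γ : Subgroup G}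
    (hcomm : ∀ g : G, (Γ.map (MulAut.conj g : G →* G)).Commensurable Γ) (x : G ⧸ Γ) :
    (MulAction.stabilizer G x).relIndex Γ ≠ 0 := by
  obtain ⟨g, rfl⟩ := QuotientGroup.mk_surjective x
  have hx : (g : G ⧸ Γ) = g • ((1 : G) : G ⧸ Γ) := by
    rw [MulAction.Quotient.smul_mk, smul_eq_mul, mul_one]
  rw [hx, MulAction.stabilizer_smul_eq_stabilizer_map_conj, MulAction.stabilizer_quotient]
  exact (hcomm g).1

theorem relIndex_ne_zero_of_forall_smul_eq_imp_mem {Γ N : Subgroup G}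
    (hcomm : ∀ g : G, (Γ.map (MulAut.conj g : G →* G)).Commensurable Γ) (F : Finset (G ⧸ Γ))
    (hF : ∀ g : G, (∀ x ∈ F, g • x = x) → g ∈ N) : N.relIndex Γ ≠ 0 := by
  have hle : ⨅ x : F, MulAction.stabilizer G x.1 ≤ N := by
    intro g hg
    rw [Subgroup.mem_iInf] at hg
    exact hF g fun x hx => hg ⟨x, hx⟩
  have hfin := Subgroup.relIndex_iInf_ne_zero (L := Γ) fun x : F =>
    relIndex_stabilizer_ne_zero_of_commensurable hcomm x.1
  exact ne_zero_of_dvd_ne_zero hfin (Subgroup.relIndex_dvd_of_le_left Γ hle)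

end RelIndex

theorem Subgroup.discreteTopology_of_isOpen_inter_finite {G : Type*} [Group G]
    [TopologicalSpace G] [IsTopologicalGroup G] [T1Space G] (H : Subgroup G) {U : Set G}
    (hU : IsOpen U) (h1 : 1 ∈ U) (hfin : (U ∩ H).Finite) : DiscreteTopology H := by
  refine discreteTopology_of_isOpen_singleton_one <| isOpen_induced_iff.mpr
    ⟨U \ ((U ∩ H) \ {1}), hU.sdiff (hfin.sdiff).isClosed, ?_⟩
  ext ⟨g, hg⟩
  simp only [Set.mem_preimage, Set.mem_sdiff, Set.mem_inter_iff, SetLike.mem_coe, hg,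
    Set.mem_singleton_iff, Subgroup.mk_eq_one]
  constructor
  · rintro ⟨hgU, hne⟩
    by_contra h
    exact hne ⟨⟨hgU, trivial⟩, h⟩
  · rintro rfl
    exact ⟨h1, fun h => h.2 rfl⟩

section RelativeProfiniteCompletion

attribute [local instance] permPointwiseTopology

variable {G : Type*} [Group G] {Γ : Subgroup G}

theorem relIndex_ker_toPermHom_ne_zero_of_discreteTopology
    (hcomm : ∀ g : G, (Γ.map (MulAut.conj g : G →* G)).Commensurable Γ)
    (hdisc : DiscreteTopology (closure (Set.range (MulAction.toPermHom G (G ⧸ Γ))))) :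
    (MulAction.toPermHom G (G ⧸ Γ)).ker.relIndex Γ ≠ 0 := by
  let _ : TopologicalSpace (G ⧸ Γ) := ⊥
  have := discreteTopology_bot (G ⧸ Γ)
  set τ := MulAction.toPermHom G (G ⧸ Γ)
  have : DiscreteTopology (Set.range τ) := hdisc.of_subset subset_closure
  obtain ⟨F, hF⟩ := exists_finset_forall_apply_eq_imp_eq_one (S := Set.range τ) ⟨1, map_one τ⟩
  exact relIndex_ne_zero_of_forall_smul_eq_imp_mem hcomm F fun g hg => hF _ ⟨g, rfl⟩ hg

theorem discreteTopology_closure_range_toPermHom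
    (hker : (MulAction.toPermHom G (G ⧸ Γ)).ker.relIndex Γ ≠ 0) :
    DiscreteTopology (closure (Set.range (MulAction.toPermHom G (G ⧸ Γ)))) := by
  let _ : TopologicalSpace (G ⧸ Γ) := ⊥
  have := discreteTopology_bot (G ⧸ Γ)
  have := isTopologicalGroup_perm (X := G ⧸ Γ)
  have := t2Space_perm (X := G ⧸ Γ)
  set τ := MulAction.toPermHom G (G ⧸ Γ)
  have himage : ((Γ.map τ : Subgroup _) : Set (Perm (G ⧸ Γ))).Finite :=
    have := Nat.finite_of_card_ne_zero (Γ.relIndex_ker τ ▸ hker)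
    Set.toFinite _
  let U : Set (Perm (G ⧸ Γ)) := {σ | σ ((1 : G) : G ⧸ Γ) = (1 : G)}
  have hU : IsOpen U := isOpen_setOf_perm_apply_eq _ _
  have hUrange : U ∩ Set.range τ ⊆ Γ.map τ := by
    rintro _ ⟨hg, g, rfl⟩
    exact ⟨g, MulAction.stabilizer_quotient Γ ▸ hg, rfl⟩
  rw [← MonoidHom.coe_range, ← Subgroup.topologicalClosure_coe]
  refine τ.range.topologicalClosure.discreteTopology_of_isOpen_inter_finite hU rfl
    (himage.subset ?_)
  calc U ∩ closure (Set.range τ) ⊆ closure (U ∩ Set.range τ) := hU.inter_closure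
    _ ⊆ Γ.map τ := himage.isClosed.closure_subset_iff.mpr hUrange

end RelativeProfiniteCompletion

theorem relProfiniteCompletion_discrete_iff_general {Λ : Type*} [Group Λ]
    (Γ : Subgroup Λ)
    (hcomm : ∀ l : Λ, Subgroup.Commensurable (Subgroup.map ((MulAut.conj l) : Λ →* Λ) Γ) Γ) :
    letI : TopologicalSpace (Equiv.Perm (Λ ⧸ Γ)) := permPointwiseTopology (Λ ⧸ Γ)
    let τ : Λ →* Equiv.Perm (Λ ⧸ Γ) := MulAction.toPermHom Λ (Λ ⧸ Γ)
    (DiscreteTopology ↥(closure (Set.range ⇑τ)) ↔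
      ∃ Γ₀ : Subgroup Λ, Γ₀ ≤ Γ ∧ Γ₀.relIndex Γ ≠ 0 ∧ Γ₀.Normal) := by
  intro τ
  rw [Subgroup.exists_normal_le_relIndex_ne_zero_iff, Subgroup.normalCore_eq_ker]
  exact ⟨relIndex_ker_toPermHom_ne_zero_of_discreteTopology hcomm,
    discreteTopology_closure_range_toPermHom⟩

/-- If `Γ` is a commensurated subgroup of a countable group `Λ`, the relative profinite
completion `Λ//Γ` (the closure of `τ(Λ)` in `Sym(Λ/Γ)` with the topology of pointwise
convergence) is discrete if and only if there is a finite index subgroup `Γ₀ ≤ Γ` which is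
normal in `Λ`. -/
theorem relProfiniteCompletion_discrete_iff {Λ : Type*} [Group Λ] [Countable Λ]
    (Γ : Subgroup Λ)
    (hcomm : ∀ l : Λ, Subgroup.Commensurable (Subgroup.map ((MulAut.conj l) : Λ →* Λ) Γ) Γ) :
    letI : TopologicalSpace (Equiv.Perm (Λ ⧸ Γ)) := permPointwiseTopology (Λ ⧸ Γ)
    let τ : Λ →* Equiv.Perm (Λ ⧸ Γ) := MulAction.toPermHom Λ (Λ ⧸ Γ)
    (DiscreteTopology ↥(closure (Set.range ⇑τ)) ↔
      ∃ Γ₀ : Subgroup Λ, Γ₀ ≤ Γ ∧ Γ₀.relIndex Γ ≠ 0 ∧ Γ₀.Normal) :=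
  relProfiniteCompletion_discrete_iff_general Γ hcomm
end

section
/- Let π : (X, ν) → (Y, η) and φ : (Y, η) → (Z, ρ) be measure-preserving maps of standard probability spaces with disintegrations D_π of ν over η and D_φ of η over ρ. Then for almost every z ∈ Z, the pushforward π_*D_{φ∘π}(z) equals D_φ(z), and D_{φ∘π}(z) = ∫_Y D_π(y) dD_φ(z)(y). -/
/-!
Both identities are instances of the a.e. uniqueness of disintegrations: a finite kernel `κ`
concentrated on the fibers of `f` is recovered from `κ ∘ₘ ρ` alone, because `ρ ⊗ₘ κ` is the
pushforward of `κ ∘ₘ ρ` under `w ↦ (f w, w)`, and `ρ ⊗ₘ κ` determines `κ` up to `ρ`-null sets.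
The kernels `z ↦ π_* Dφπ(z)` and `Dπ ∘ₖ Dφ` are concentrated on the fibers of `φ` and `φ ∘ π`
respectively, and they integrate against `ρ` to `π_* ν = η` and `Dπ ∘ₘ η = ν`.
-/

open MeasureTheory

namespace ProbabilityTheory.Kernel

variable {X Y Z : Type*} {mX : MeasurableSpace X} {mY : MeasurableSpace Y}
  {mZ : MeasurableSpace Z} {ρ : Measure Z}

lemma compProd_eq_map_comp_of_ae_fiber [SFinite ρ] {κ : Kernel Z Y} [IsSFiniteKernel κ]
    {f : Y → Z} (hf : Measurable f) (hκ : ∀ᵐ z ∂ρ, ∀ᵐ y ∂κ z, f y = z) :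
    ρ ⊗ₘ κ = (κ ∘ₘ ρ).map (fun y ↦ (f y, y)) := by
  ext s hs
  have hgraph : Measurable (fun y ↦ (f y, y)) := hf.prodMk measurable_id
  rw [Measure.compProd_apply hs, Measure.map_apply hgraph hs,
    Measure.bind_apply (hgraph hs) κ.aemeasurable]
  refine lintegral_congr_ae ?_
  filter_upwards [hκ] with z hz
  refine measure_congr ?_
  filter_upwards [hz] with y hy
  change ((z, y) ∈ s) = ((f y, y) ∈ s)
  rw [hy]

lemma ae_eq_of_comp_eq_of_ae_fiber [MeasurableSpace.CountableOrCountablyGenerated Z Y]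
    [IsFiniteMeasure ρ] {κ η : Kernel Z Y} [IsFiniteKernel κ] [IsFiniteKernel η]
    {f : Y → Z} (hf : Measurable f)
    (hκ : ∀ᵐ z ∂ρ, ∀ᵐ y ∂κ z, f y = z) (hη : ∀ᵐ z ∂ρ, ∀ᵐ y ∂η z, f y = z)
    (h : κ ∘ₘ ρ = η ∘ₘ ρ) :
    κ =ᵐ[ρ] η :=
  ae_eq_of_compProd_eq <| by
    rw [compProd_eq_map_comp_of_ae_fiber hf hκ, compProd_eq_map_comp_of_ae_fiber hf hη, h]

lemma ae_fiber_map [MeasurableSingletonClass Z] {κ : Kernel Z X} {π : X → Y} {φ : Y → Z}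
    (hπ : Measurable π) (hφ : Measurable φ) (hκ : ∀ᵐ z ∂ρ, ∀ᵐ x ∂κ z, φ (π x) = z) :
    ∀ᵐ z ∂ρ, ∀ᵐ y ∂κ.map π z, φ y = z := by
  filter_upwards [hκ] with z hz
  rw [map_apply _ hπ]
  exact (ae_map_iff hπ.aemeasurable (hφ (measurableSet_singleton z))).2 hz

lemma ae_fiber_comp [MeasurableSingletonClass Z] {κ : Kernel Z Y} {η : Kernel Y X}
    {π : X → Y} {φ : Y → Z} (hπ : Measurable π) (hφ : Measurable φ)
    (hκ : ∀ᵐ z ∂ρ, ∀ᵐ y ∂κ z, φ y = z) (hη : ∀ᵐ y ∂(κ ∘ₘ ρ), ∀ᵐ x ∂η y, π x = y) :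
    ∀ᵐ z ∂ρ, ∀ᵐ x ∂(η ∘ₖ κ) z, φ (π x) = z := by
  filter_upwards [hκ, Measure.ae_ae_of_ae_comp hη] with z hφz hπz
  rw [comp_apply]
  refine Measure.ae_comp_of_ae_ae ((hφ.comp hπ) (measurableSet_singleton z)) ?_
  filter_upwards [hφz, hπz] with y hy hxy
  filter_upwards [hxy] with x hx
  rw [hx, hy]

end ProbabilityTheory.Kernel

open ProbabilityTheory Kernel

theorem disintegration_comp_general {X Y Z : Type*}
    [MeasurableSpace X] [MeasurableSpace Y] [MeasurableSpace Z]
    [StandardBorelSpace X] [StandardBorelSpace Y] [StandardBorelSpace Z]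
    (ν : Measure X) (η : Measure Y) (ρ : Measure Z)
    [IsProbabilityMeasure ρ]
    (π : X → Y) (φ : Y → Z) (hπ : Measurable π) (hφ : Measurable φ)
    (hπν : ν.map π = η)
    (Dπ : Y → Measure X) (Dφ : Z → Measure Y) (Dφπ : Z → Measure X)
    (hDπm : Measurable Dπ) (hDφm : Measurable Dφ) (hDφπm : Measurable Dφπ)
    (hDπp : ∀ y, IsProbabilityMeasure (Dπ y)) (hDφp : ∀ z, IsProbabilityMeasure (Dφ z))
    (hDφπp : ∀ z, IsProbabilityMeasure (Dφπ z))
    (hDπs : ∀ᵐ y ∂η, Dπ y {x | π x ≠ y} = 0)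
    (hDφs : ∀ᵐ z ∂ρ, Dφ z {y | φ y ≠ z} = 0)
    (hDφπs : ∀ᵐ z ∂ρ, Dφπ z {x | φ (π x) ≠ z} = 0)
    (hDπb : η.bind Dπ = ν) (hDφb : ρ.bind Dφ = η) (hDφπb : ρ.bind Dφπ = ν) :
    ∀ᵐ z ∂ρ, (Dφπ z).map π = Dφ z ∧ Dφπ z = (Dφ z).bind Dπ := by
  let Kπ : Kernel Y X := ⟨Dπ, hDπm⟩
  let Kφ : Kernel Z Y := ⟨Dφ, hDφm⟩
  let Kφπ : Kernel Z X := ⟨Dφπ, hDφπm⟩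
  have : IsMarkovKernel Kπ := ⟨hDπp⟩
  have : IsMarkovKernel Kφ := ⟨hDφp⟩
  have : IsMarkovKernel Kφπ := ⟨hDφπp⟩
  have hKφρ : Kφ ∘ₘ ρ = η := hDφb
  have hKφπρ : Kφπ ∘ₘ ρ = ν := hDφπb
  have hKπη : Kπ ∘ₘ η = ν := hDπb
  have hKφ : ∀ᵐ z ∂ρ, ∀ᵐ y ∂Kφ z, φ y = z := hDφs.mono fun _ ↦ ae_iff.2
  have hKφπ : ∀ᵐ z ∂ρ, ∀ᵐ x ∂Kφπ z, φ (π x) = z := hDφπs.mono fun _ ↦ ae_iff.2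
  have hKπ : ∀ᵐ y ∂(Kφ ∘ₘ ρ), ∀ᵐ x ∂Kπ y, π x = y := hKφρ ▸ hDπs.mono fun _ ↦ ae_iff.2
  have hpush : Kφπ.map π =ᵐ[ρ] Kφ :=
    ae_eq_of_comp_eq_of_ae_fiber hφ (ae_fiber_map hπ hφ hKφπ) hKφ <| by
      rw [← Measure.map_comp _ _ hπ, hKφπρ, hKφρ, hπν]
  have hcomp : Kφπ =ᵐ[ρ] Kπ ∘ₖ Kφ :=
    ae_eq_of_comp_eq_of_ae_fiber (f := fun x ↦ φ (π x)) (hφ.comp hπ) hKφπ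
      (ae_fiber_comp hπ hφ hKφ hKπ) <| by rw [← Measure.comp_assoc, hKφπρ, hKφρ, hKπη]
  filter_upwards [hpush, hcomp] with z hz₁ hz₂
  exact ⟨(map_apply Kφπ hπ z).symm.trans hz₁, hz₂⟩

/-- Composition of disintegrations: if `π : (X,ν) → (Y,η)` and `φ : (Y,η) → (Z,ρ)` are
measure-preserving maps of standard probability spaces with disintegrations `Dπ`, `Dφ` and
`Dφπ` (of `ν` over `ρ` via `φ ∘ π`), then for a.e. `z`, `π_* Dφπ(z) = Dφ(z)` and
`Dφπ(z) = ∫_Y Dπ(y) dDφ(z)(y)`. -/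
theorem disintegration_comp {X Y Z : Type*}
    [MeasurableSpace X] [MeasurableSpace Y] [MeasurableSpace Z]
    [StandardBorelSpace X] [StandardBorelSpace Y] [StandardBorelSpace Z]
    (ν : Measure X) (η : Measure Y) (ρ : Measure Z)
    [IsProbabilityMeasure ν] [IsProbabilityMeasure η] [IsProbabilityMeasure ρ]
    (π : X → Y) (φ : Y → Z) (hπ : Measurable π) (hφ : Measurable φ)
    (hπν : ν.map π = η) (hφη : η.map φ = ρ)
    (Dπ : Y → Measure X) (Dφ : Z → Measure Y) (Dφπ : Z → Measure X)
    (hDπm : Measurable Dπ) (hDφm : Measurable Dφ) (hDφπm : Measurable Dφπ)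
    (hDπp : ∀ y, IsProbabilityMeasure (Dπ y)) (hDφp : ∀ z, IsProbabilityMeasure (Dφ z))
    (hDφπp : ∀ z, IsProbabilityMeasure (Dφπ z))
    (hDπs : ∀ᵐ y ∂η, Dπ y {x | π x ≠ y} = 0)
    (hDφs : ∀ᵐ z ∂ρ, Dφ z {y | φ y ≠ z} = 0)
    (hDφπs : ∀ᵐ z ∂ρ, Dφπ z {x | φ (π x) ≠ z} = 0)
    (hDπb : η.bind Dπ = ν) (hDφb : ρ.bind Dφ = η) (hDφπb : ρ.bind Dφπ = ν) :
    ∀ᵐ z ∂ρ, (Dφπ z).map π = Dφ z ∧ Dφπ z = (Dφ z).bind Dπ :=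
  disintegration_comp_general ν η ρ π φ hπ hφ hπν Dπ Dφ Dφπ hDπm hDφm hDφπm hDπp hDφp hDφπp hDπs
    hDφs hDφπs hDπb hDφb hDφπb
end

section
/- Let G act measurably on a standard probability space (X, ν) with ν quasi-invariant, and suppose (X, ν) is contractive: for every measurable B ⊆ X with ν(B) < 1 and every ε > 0 there exists g ∈ G with ν(gB) < ε. Then (X, ν) is contractive if and only if the map f ↦ (g ↦ (gν)(f)) is an isometry from L^∞(X, ν) into L^∞(G, Haar). -/
/-!
Write `μ_g = ν.map (g • ·)`; then `ν (g • B) = μ_{g⁻¹} B`, so contractivity says that every set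
of measure `< 1` is almost null for some `μ_g`. Since `μ_g ≪ ν`, always `|μ_g f| ≤ ‖f‖_∞`.
Conversely, if `t < ‖f‖_∞` then `{f > t}` or `{-f > t}` has positive measure, and if `|f| ≤ C`,
a `μ_g` giving `{f ≤ t}` mass at most `η` has `μ_g f ≥ t - (t + C) η`. For the other implication,
test the isometry on the indicator of `Bᶜ`: some `μ_g` gives `Bᶜ` measure close to `1`.
-/

open MeasureTheory

section

variable {X ι : Type*} [MeasurableSpace X]

theorem ofReal_abs_integral_le_eLpNorm_top {μ ν : Measure X} [IsProbabilityMeasure μ]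
    (hμν : μ ≪ ν) (f : X → ℝ) : ENNReal.ofReal |∫ x, f x ∂μ| ≤ eLpNorm f ⊤ ν :=
  calc ENNReal.ofReal |∫ x, f x ∂μ|
      = ‖∫ x, f x ∂μ‖ₑ := (Real.enorm_eq_ofReal_abs _).symm
    _ ≤ ∫⁻ x, ‖f x‖ₑ ∂μ := enorm_integral_le_lintegral_enorm _
    _ ≤ ∫⁻ _, eLpNormEssSup f μ ∂μ := lintegral_mono_ae ae_le_eLpNormEssSup
    _ = eLpNormEssSup f μ := by simp
    _ ≤ eLpNormEssSup f ν := eLpNormEssSup_mono_measure f hμν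
    _ = eLpNorm f ⊤ ν := eLpNorm_exponent_top.symm

theorem sub_mul_measureReal_le_integral {μ : Measure X} [IsProbabilityMeasure μ] {B : Set X}
    (hB : MeasurableSet B) {f : X → ℝ} (hf : Integrable f μ) {m t : ℝ}
    (hm : ∀ x ∈ B, m ≤ f x) (ht : ∀ x ∉ B, t ≤ f x) :
    t - (t - m) * μ.real B ≤ ∫ x, f x ∂μ := by
  have hpt : ∀ x, t - B.indicator (fun _ => t - m) x ≤ f x := by
    intro x
    by_cases hx : x ∈ B <;> simp [hx, hm, ht]
  calc t - (t - m) * μ.real B = ∫ x, (t - B.indicator (fun _ => t - m) x) ∂μ := by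
        rw [integral_sub (integrable_const _) ((integrable_const _).indicator hB),
          integral_const, integral_indicator_const _ hB]
        simp [mul_comm]
    _ ≤ ∫ x, f x ∂μ :=
        integral_mono ((integrable_const _).sub ((integrable_const _).indicator hB)) hf hpt

theorem ofReal_le_iSup_integral_of_forall_exists_measure_lt (μ : ι → Measure X)
    [∀ i, IsProbabilityMeasure (μ i)] {B : Set X} (hB : MeasurableSet B)
    (hsmall : ∀ ε : ENNReal, 0 < ε → ∃ i, μ i B < ε) {f : X → ℝ}
    (hf : ∀ i, Integrable f (μ i)) {m t : ℝ} (hm : ∀ x ∈ B, m ≤ f x) (ht : ∀ x ∉ B, t ≤ f x) :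
    ENNReal.ofReal t ≤ ⨆ i, ENNReal.ofReal (∫ x, f x ∂μ i) := by
  refine ENNReal.le_of_forall_pos_le_add fun ε hε _ => ?_
  obtain ⟨η, hη, hηε⟩ := exists_pos_mul_lt (show (0 : ℝ) < ε from hε) |t - m|
  obtain ⟨i, hi⟩ := hsmall (ENNReal.ofReal η) (ENNReal.ofReal_pos.2 hη)
  have hBη : (μ i).real B ≤ η := ENNReal.toReal_le_of_le_ofReal hη.le hi.le
  have hint := sub_mul_measureReal_le_integral hB (hf i) hm ht
  have hslack : (t - m) * (μ i).real B ≤ ε := by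
    have h0 : 0 ≤ (μ i).real B := measureReal_nonneg
    nlinarith [le_abs_self (t - m), abs_nonneg (t - m)]
  calc ENNReal.ofReal t ≤ ENNReal.ofReal (∫ x, f x ∂μ i + ε) :=
        ENNReal.ofReal_le_ofReal (by linarith)
    _ ≤ ENNReal.ofReal (∫ x, f x ∂μ i) + ENNReal.ofReal ε := ENNReal.ofReal_add_le
    _ ≤ (⨆ i, ENNReal.ofReal (∫ x, f x ∂μ i)) + ε := by
        gcongr
        · exact le_iSup (fun i => ENNReal.ofReal (∫ x, f x ∂μ i)) i
        · simp

theorem ofReal_le_iSup_integral_of_measure_pos {ν : Measure X} [IsProbabilityMeasure ν]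
    (μ : ι → Measure X) [∀ i, IsProbabilityMeasure (μ i)]
    (hsmall : ∀ B, MeasurableSet B → ν B < 1 → ∀ ε : ENNReal, 0 < ε → ∃ i, μ i B < ε)
    {f : X → ℝ} (hf : Measurable f) {C : ℝ} (hC : ∀ x, |f x| ≤ C) {t : ℝ}
    (hpos : 0 < ν {x | t < f x}) :
    ENNReal.ofReal t ≤ ⨆ i, ENNReal.ofReal (∫ x, f x ∂μ i) := by
  have hB : MeasurableSet {x | f x ≤ t} := measurableSet_le hf measurable_const
  have hB1 : ν {x | f x ≤ t} < 1 := by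
    simpa [Set.compl_ofPred] using
      prob_compl_lt_one_sub_of_lt_prob hpos (measurableSet_lt measurable_const hf)
  exact ofReal_le_iSup_integral_of_forall_exists_measure_lt μ hB (hsmall _ hB hB1)
    (fun i => .of_bound hf.aestronglyMeasurable C (.of_forall hC)) (m := -C)
    (fun x _ => neg_le_of_abs_le (hC x)) (fun x hx => (not_le.1 hx).le)

theorem measure_lt_abs_pos_of_ofReal_lt_eLpNorm_top {ν : Measure X} {f : X → ℝ} {t : ℝ}
    (ht : ENNReal.ofReal t < eLpNorm f ⊤ ν) : 0 < ν {x | t < |f x|} := by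
  refine pos_iff_ne_zero.2 fun h => ht.not_ge ?_
  rw [eLpNorm_exponent_top]
  refine eLpNormEssSup_le_of_ae_bound (measure_mono_null (fun x hx => ?_) h)
  simpa [Real.norm_eq_abs] using hx

theorem eLpNorm_top_le_iSup_abs_integral {ν : Measure X} [IsProbabilityMeasure ν]
    (μ : ι → Measure X) [∀ i, IsProbabilityMeasure (μ i)]
    (hsmall : ∀ B, MeasurableSet B → ν B < 1 → ∀ ε : ENNReal, 0 < ε → ∃ i, μ i B < ε)
    {f : X → ℝ} (hf : Measurable f) {C : ℝ} (hC : ∀ x, |f x| ≤ C) :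
    eLpNorm f ⊤ ν ≤ ⨆ i, ENNReal.ofReal |∫ x, f x ∂μ i| := by
  refine le_of_forall_lt_imp_le_of_dense fun c hc => ?_
  obtain ⟨t, rfl⟩ : ∃ t : ℝ, ENNReal.ofReal t = c :=
    ⟨c.toReal, ENNReal.ofReal_toReal hc.ne_top⟩
  have hsplit : {x | t < |f x|} = {x | t < f x} ∪ {x | t < -f x} := by
    ext x; simp [lt_abs]
  have hpos := measure_lt_abs_pos_of_ofReal_lt_eLpNorm_top hc
  rw [hsplit, pos_iff_ne_zero, Ne, measure_union_null_iff, not_and_or] at hpos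
  rcases hpos with hpos_f | hpos_neg_f
  · refine (ofReal_le_iSup_integral_of_measure_pos μ hsmall hf hC
      (pos_iff_ne_zero.2 hpos_f)).trans ?_
    gcongr
    exact le_abs_self _
  · refine (ofReal_le_iSup_integral_of_measure_pos μ hsmall hf.neg (f := fun x => -f x)
      (by simpa using hC) (pos_iff_ne_zero.2 hpos_neg_f)).trans ?_
    gcongr
    rw [integral_neg]
    exact neg_le_abs _

theorem ofReal_abs_integral_indicator_one {μ : Measure X} [IsFiniteMeasure μ] {s : Set X}
    (hs : MeasurableSet s) : ENNReal.ofReal |∫ x, s.indicator (1 : X → ℝ) x ∂μ| = μ s := by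
  rw [integral_indicator_one hs, abs_of_nonneg measureReal_nonneg, ofReal_measureReal]

theorem eLpNorm_top_indicator_one {ν : Measure X} {s : Set X}
    (hνs : ν s ≠ 0) : eLpNorm (s.indicator (1 : X → ℝ)) ⊤ ν = 1 := by
  rw [eLpNorm_exponent_top]
  exact (eLpNormEssSup_indicator_const_eq s (1 : ℝ) hνs).trans enorm_one

theorem exists_measure_lt_of_eLpNorm_top_le_iSup {ν : Measure X} [IsProbabilityMeasure ν]
    (μ : ι → Measure X) [∀ i, IsProbabilityMeasure (μ i)] {B : Set X} (hB : MeasurableSet B)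
    (hB1 : ν B < 1)
    (h : eLpNorm (Bᶜ.indicator (1 : X → ℝ)) ⊤ ν ≤
      ⨆ i, ENNReal.ofReal |∫ x, Bᶜ.indicator (1 : X → ℝ) x ∂μ i|)
    {ε : ENNReal} (hε : 0 < ε) : ∃ i, μ i B < ε := by
  have hνBc : ν Bᶜ ≠ 0 := by
    rw [Ne, prob_compl_eq_zero_iff hB]; exact hB1.ne
  simp_rw [eLpNorm_top_indicator_one hνBc, ofReal_abs_integral_indicator_one hB.compl] at h
  obtain ⟨i, hi⟩ := lt_iSup_iff.1
    ((ENNReal.sub_lt_self ENNReal.one_ne_top one_ne_zero hε.ne').trans_le h)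
  refine ⟨i, lt_of_lt_of_le ?_ (tsub_tsub_le (a := ε) (b := 1))⟩
  simpa using prob_compl_lt_one_sub_of_lt_prob hi hB.compl

theorem map_smul_apply_eq_measure_image_inv_smul {G : Type*} [Group G] [MulAction G X]
    {ν : Measure X} {g : G} (hg : Measurable fun x : X => g • x) {B : Set X}
    (hB : MeasurableSet B) : ν.map (fun x => g • x) B = ν ((fun x => g⁻¹ • x) '' B) := by
  rw [Measure.map_apply hg hB, Set.preimage_smul, Set.image_smul]

end

/-- Algebraic characterization of contractive actions (Jaworski): a quasi-invariant action
of `G` on `(X, ν)` is contractive (every measurable set of less than full measure can be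
translated to have arbitrarily small measure) if and only if for every bounded measurable
`f`, `sup_{g ∈ G} |(gν)(f)| = ‖f‖_{L^∞(X,ν)}`, i.e. `f ↦ (g ↦ (gν)(f))` is an isometry
from `L^∞(X,ν)` into `L^∞(G)`. -/
theorem contractive_iff_isometry {G X : Type*} [Group G] [MulAction G X]
    [MeasurableSpace X]
    (ν : Measure X) [IsProbabilityMeasure ν]
    (hmeas : ∀ g : G, Measurable fun x : X => g • x)
    (hqi : ∀ g : G, ν.map (fun x : X => g • x) ≪ ν ∧ ν ≪ ν.map (fun x : X => g • x)) :
    (∀ B : Set X, MeasurableSet B → ν B < 1 → ∀ ε : ENNReal, 0 < ε →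
        ∃ g : G, ν ((fun x : X => g • x) '' B) < ε) ↔
      (∀ f : X → ℝ, Measurable f → (∃ C : ℝ, ∀ x, |f x| ≤ C) →
        (⨆ g : G, ENNReal.ofReal |∫ x, f x ∂(ν.map (fun y : X => g • y))|) =
          eLpNorm f ⊤ ν) := by
  have (g : G) : IsProbabilityMeasure (ν.map fun x : X => g • x) :=
    Measure.isProbabilityMeasure_map (hmeas g).aemeasurable
  constructor
  · rintro hcon f hf ⟨C, hC⟩
    refine le_antisymm (iSup_le fun g => ofReal_abs_integral_le_eLpNorm_top (hqi g).1 f)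
      (eLpNorm_top_le_iSup_abs_integral _ (fun B hB hB1 ε hε => ?_) hf hC)
    obtain ⟨g, hg⟩ := hcon B hB hB1 ε hε
    exact ⟨g⁻¹, by rwa [map_smul_apply_eq_measure_image_inv_smul (hmeas _) hB, inv_inv]⟩
  · intro hiso B hB hB1 ε hε
    have hbound (x : X) : |Bᶜ.indicator (1 : X → ℝ) x| ≤ 1 := by
      by_cases hx : x ∈ Bᶜ <;> simp [hx]
    obtain ⟨g, hg⟩ := exists_measure_lt_of_eLpNorm_top_le_iSup _ hB hB1
      (hiso _ (measurable_one.indicator hB.compl) ⟨1, hbound⟩).ge hε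
    exact ⟨g⁻¹, by rwa [← map_smul_apply_eq_measure_image_inv_smul (hmeas g) hB]⟩
end

section
/- Let (X, ν) be a contractive G-space and (Y, η) a measure-preserving G-space. Then any joining of (X, ν) and (Y, η) for which the projection to X is relatively measure-preserving is the independent joining ν × η. -/
/-!
Fibrewise, the disintegration `D` assigns to a point `x` a probability measure on `{x} × Y`;
write `f_A(x)` for its mass on the strip `X × A`. Relative measure preservation and the
invariance of `η` make every translate `x ↦ f_A(g • x)` integrate to `η A`. Contractivity moves
almost all of the mass of `ν` into any set of positive measure, so a value `t` taken by `f_A`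
on a set of positive measure satisfies `t ≤ η A`. Applied to `A` and `Aᶜ`, this gives
`f_A = η A` a.e., and integrating over `x` computes `α` on rectangles as `ν × η`.
-/

open MeasureTheory
open scoped ENNReal

def MeasureTheory.Measure.IsContractive (G : Type*) {X : Type*} [SMul G X] [MeasurableSpace X]
    (ν : Measure X) : Prop :=
  ∀ B : Set X, MeasurableSet B → ν B < 1 → ∀ ε : ℝ≥0∞, 0 < ε →
    ∃ g : G, ν ((fun x : X => g • x) '' B) < ε

section

variable {G X Y : Type*} [Group G] [MulAction G X] [MulAction G Y]
  [MeasurableSpace X] [MeasurableSpace Y]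

namespace MeasureTheory.Measure.IsContractive

variable {ν : Measure X} [IsProbabilityMeasure ν]

theorem iSup_measure_preimage_smul_eq_one (hν : IsContractive G ν) {S : Set X}
    (hS : MeasurableSet S) (hS0 : ν S ≠ 0) :
    ⨆ g : G, ν ((fun x : X => g • x) ⁻¹' S) = 1 := by
  refine le_antisymm (iSup_le fun _ => prob_le_one) (ENNReal.le_of_forall_pos_le_add ?_)
  intro ε hε _
  have hcompl : ν Sᶜ < 1 := by
    rw [prob_compl_eq_one_sub hS]
    exact ENNReal.sub_lt_self ENNReal.one_ne_top one_ne_zero hS0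
  obtain ⟨g, hg⟩ := hν Sᶜ hS.compl hcompl ε (by exact_mod_cast hε)
  rw [Set.image_smul, ← Set.preimage_smul_inv, Set.preimage_compl] at hg
  calc 1 = ν Set.univ := measure_univ.symm
    _ ≤ ν ((fun x : X => g⁻¹ • x) ⁻¹' S) + ν ((fun x : X => g⁻¹ • x) ⁻¹' S)ᶜ := by
      rw [← Set.union_compl_self ((fun x : X => g⁻¹ • x) ⁻¹' S)]
      exact measure_union_le _ _
    _ ≤ (⨆ g : G, ν ((fun x : X => g • x) ⁻¹' S)) + ε :=
      add_le_add (le_iSup (fun g : G => ν ((fun x : X => g • x) ⁻¹' S)) g⁻¹) hg.le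

theorem ae_le_of_lintegral_comp_smul_le (hν : IsContractive G ν)
    (hmX : ∀ g : G, Measurable fun x : X => g • x) {f : X → ℝ≥0∞} (hf : Measurable f)
    {c : ℝ≥0∞} (hc : ∀ g : G, ∫⁻ x, f (g • x) ∂ν ≤ c) :
    ∀ᵐ x ∂ν, f x ≤ c := by
  have hlevel : ∀ t, ν {x | t ≤ f x} ≠ 0 → t ≤ c := by
    intro t ht
    have hS : MeasurableSet {x | t ≤ f x} := measurableSet_le measurable_const hf
    rw [← mul_one t, ← hν.iSup_measure_preimage_smul_eq_one hS ht, ENNReal.mul_iSup]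
    exact iSup_le fun g => (mul_meas_ge_le_lintegral (hf.comp (hmX g)) t).trans (hc g)
  refine (ENNReal.ae_le_essSup f).mono fun x hx => hx.trans
    (le_of_forall_lt_imp_le_of_dense fun t ht => hlevel t fun h0 => ht.not_ge ?_)
  refine essSup_le_of_ae_le t (ae_iff.2 (measure_mono_null (fun x hx => ?_) h0))
  exact (not_le.1 hx).le

end MeasureTheory.Measure.IsContractive

theorem MeasureTheory.measure_eq_of_le_of_compl_le {Z : Type*} [MeasurableSpace Z]
    {μ : Measure Z} {η : Measure Y} [IsProbabilityMeasure μ] [IsProbabilityMeasure η]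
    {s : Set Z} {t : Set Y} (hs : MeasurableSet s) (ht : MeasurableSet t)
    (h : μ s ≤ η t) (hc : μ sᶜ ≤ η tᶜ) : μ s = η t := by
  rw [prob_compl_eq_one_sub hs, prob_compl_eq_one_sub ht] at hc
  exact le_antisymm h ((ENNReal.sub_le_sub_iff_left prob_le_one ENNReal.one_ne_top).1 hc)

theorem MeasureTheory.measure_prod_eq_indicator {μ : Measure (X × Y)} {x : X}
    (hμ : μ {p | p.1 ≠ x} = 0) (B : Set X) (A : Set Y) :
    μ (B ×ˢ A) = B.indicator (fun _ => μ (Prod.snd ⁻¹' A)) x := by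
  have hfst : ∀ᵐ p ∂μ, p.1 = x := ae_iff.2 hμ
  by_cases hx : x ∈ B
  · rw [Set.indicator_of_mem hx]
    refine measure_congr (Filter.eventuallyEq_set.2 (hfst.mono fun p hp => ?_))
    simp [hp, hx]
  · rw [Set.indicator_of_notMem hx, ← measure_empty (μ := μ)]
    refine measure_congr (Filter.eventuallyEq_set.2 (hfst.mono fun p hp => ?_))
    simp [hp, hx]

section Disintegration

variable {ν : Measure X} {η : Measure Y} {D : X → Measure (X × Y)}

theorem lintegral_apply_preimage_snd_smul {g : G} (hmX : Measurable fun x : X => g • x)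
    (hmY : Measurable fun y : Y => g • y) (hη : MeasurePreserving (fun y : Y => g • y) η η)
    (hDm : Measurable D) (hDη : (ν.bind D).map Prod.snd = η)
    (hDeq : ∀ᵐ x ∂ν, D (g • x) = (D x).map fun p : X × Y => (g • p.1, g • p.2))
    {A : Set Y} (hA : MeasurableSet A) :
    ∫⁻ x, D (g • x) (Prod.snd ⁻¹' A) ∂ν = η A := by
  have hA' : MeasurableSet ((fun y : Y => g • y) ⁻¹' A) := hmY hA
  calc ∫⁻ x, D (g • x) (Prod.snd ⁻¹' A) ∂ν
      = ∫⁻ x, D x (Prod.snd ⁻¹' ((fun y : Y => g • y) ⁻¹' A)) ∂ν := by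
        refine lintegral_congr_ae (hDeq.mono fun x hx => ?_)
        dsimp only
        rw [hx, Measure.map_apply (by fun_prop) (measurable_snd hA)]
        rfl
    _ = (ν.bind D).map Prod.snd ((fun y : Y => g • y) ⁻¹' A) := by
        rw [Measure.map_apply measurable_snd hA', Measure.bind_apply (measurable_snd hA')
          hDm.aemeasurable]
    _ = η A := by rw [hDη, hη.measure_preimage hA.nullMeasurableSet]

variable [IsProbabilityMeasure ν] [IsProbabilityMeasure η] [∀ x, IsProbabilityMeasure (D x)]

theorem ae_apply_preimage_snd_eq (hν : ν.IsContractive G)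
    (hmX : ∀ g : G, Measurable fun x : X => g • x) (hmY : ∀ g : G, Measurable fun y : Y => g • y)
    (hη : ∀ g : G, MeasurePreserving (fun y : Y => g • y) η η)
    (hDm : Measurable D) (hDη : (ν.bind D).map Prod.snd = η)
    (hDeq : ∀ g : G, ∀ᵐ x ∂ν, D (g • x) = (D x).map fun p : X × Y => (g • p.1, g • p.2))
    {A : Set Y} (hA : MeasurableSet A) :
    ∀ᵐ x ∂ν, D x (Prod.snd ⁻¹' A) = η A := by
  have hle : ∀ A : Set Y, MeasurableSet A → ∀ᵐ x ∂ν, D x (Prod.snd ⁻¹' A) ≤ η A :=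
    fun A hA => hν.ae_le_of_lintegral_comp_smul_le hmX
      ((Measure.measurable_coe (measurable_snd hA)).comp hDm) fun g =>
        (lintegral_apply_preimage_snd_smul (hmX g) (hmY g) (hη g) hDm hDη (hDeq g) hA).le
  filter_upwards [hle A hA, hle Aᶜ hA.compl] with x hx hxc
  exact measure_eq_of_le_of_compl_le (measurable_snd hA) hA hx hxc

theorem bind_apply_prod_eq_mul (hν : ν.IsContractive G)
    (hmX : ∀ g : G, Measurable fun x : X => g • x) (hmY : ∀ g : G, Measurable fun y : Y => g • y)
    (hη : ∀ g : G, MeasurePreserving (fun y : Y => g • y) η η)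
    (hDm : Measurable D) (hDs : ∀ᵐ x ∂ν, D x {p : X × Y | p.1 ≠ x} = 0)
    (hDη : (ν.bind D).map Prod.snd = η)
    (hDeq : ∀ g : G, ∀ᵐ x ∂ν, D (g • x) = (D x).map fun p : X × Y => (g • p.1, g • p.2))
    {B : Set X} {A : Set Y} (hB : MeasurableSet B) (hA : MeasurableSet A) :
    ν.bind D (B ×ˢ A) = ν B * η A := by
  calc ν.bind D (B ×ˢ A) = ∫⁻ x, D x (B ×ˢ A) ∂ν :=
        Measure.bind_apply (hB.prod hA) hDm.aemeasurable
    _ = ∫⁻ x, B.indicator (fun _ => η A) x ∂ν := by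
      refine lintegral_congr_ae ?_
      filter_upwards [hDs, ae_apply_preimage_snd_eq hν hmX hmY hη hDm hDη hDeq hA] with x hx hxA
      rw [measure_prod_eq_indicator hx, hxA]
    _ = ν B * η A := by rw [lintegral_indicator hB, setLIntegral_const, mul_comm]

end Disintegration

end

theorem joining_eq_prod_of_rel_mp_general {G X Y : Type*} [Group G] [MulAction G X] [MulAction G Y]
    [MeasurableSpace X] [MeasurableSpace Y]
    (ν : Measure X) (η : Measure Y) [IsProbabilityMeasure ν] [IsProbabilityMeasure η]
    (hmX : ∀ g : G, Measurable fun x : X => g • x)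
    (hmY : ∀ g : G, Measurable fun y : Y => g • y)
    -- `(X, ν)` is contractive
    (hcontr : ∀ B : Set X, MeasurableSet B → ν B < 1 → ∀ ε : ENNReal, 0 < ε →
      ∃ g : G, ν ((fun x : X => g • x) '' B) < ε)
    -- `(Y, η)` is measure-preserving
    (hη : ∀ g : G, MeasurePreserving (fun y : Y => g • y) η η)
    -- `α` is a joining of `(X,ν)` and `(Y,η)`, quasi-invariant for the diagonal action
    (α : Measure (X × Y))
    (hα2 : α.map Prod.snd = η)
    -- `D` is the disintegration of `α` over `ν` via the projection to `X`
    (D : X → Measure (X × Y)) (hDm : Measurable D)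
    (hDp : ∀ x, IsProbabilityMeasure (D x))
    (hDs : ∀ᵐ x ∂ν, D x {p : X × Y | p.1 ≠ x} = 0)
    (hDb : ν.bind D = α)
    -- the projection to `X` is relatively measure-preserving: `D(gx) = gD(x)` a.e.
    (hDeq : ∀ g : G, ∀ᵐ x ∂ν,
      D (g • x) = (D x).map (fun p : X × Y => (g • p.1, g • p.2))) :
    α = ν.prod η := by
  subst hDb
  exact (Measure.prod_eq fun B A hB hA =>
    bind_apply_prod_eq_mul hcontr hmX hmY hη hDm hDs hα2 hDeq hB hA).symm

/-- A joining of a contractive `G`-space `(X,ν)` with a measure-preserving `G`-space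
`(Y,η)` whose projection to `X` is relatively measure-preserving is the independent
joining `ν × η`. -/
theorem joining_eq_prod_of_rel_mp {G X Y : Type*} [Group G] [MulAction G X] [MulAction G Y]
    [MeasurableSpace X] [MeasurableSpace Y]
    (ν : Measure X) (η : Measure Y) [IsProbabilityMeasure ν] [IsProbabilityMeasure η]
    (hmX : ∀ g : G, Measurable fun x : X => g • x)
    (hmY : ∀ g : G, Measurable fun y : Y => g • y)
    -- `ν` is quasi-invariant
    (hqi : ∀ g : G, ν.map (fun x : X => g • x) ≪ ν ∧ ν ≪ ν.map (fun x : X => g • x))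
    -- `(X, ν)` is contractive
    (hcontr : ∀ B : Set X, MeasurableSet B → ν B < 1 → ∀ ε : ENNReal, 0 < ε →
      ∃ g : G, ν ((fun x : X => g • x) '' B) < ε)
    -- `(Y, η)` is measure-preserving
    (hη : ∀ g : G, MeasurePreserving (fun y : Y => g • y) η η)
    -- `α` is a joining of `(X,ν)` and `(Y,η)`, quasi-invariant for the diagonal action
    (α : Measure (X × Y)) [IsProbabilityMeasure α]
    (hα1 : α.map Prod.fst = ν) (hα2 : α.map Prod.snd = η)
    (hαqi : ∀ g : G, α.map (fun p : X × Y => (g • p.1, g • p.2)) ≪ α ∧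
      α ≪ α.map (fun p : X × Y => (g • p.1, g • p.2)))
    -- `D` is the disintegration of `α` over `ν` via the projection to `X`
    (D : X → Measure (X × Y)) (hDm : Measurable D)
    (hDp : ∀ x, IsProbabilityMeasure (D x))
    (hDs : ∀ᵐ x ∂ν, D x {p : X × Y | p.1 ≠ x} = 0)
    (hDb : ν.bind D = α)
    -- the projection to `X` is relatively measure-preserving: `D(gx) = gD(x)` a.e.
    (hDeq : ∀ g : G, ∀ᵐ x ∂ν,
      D (g • x) = (D x).map (fun p : X × Y => (g • p.1, g • p.2))) :
    α = ν.prod η :=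
  joining_eq_prod_of_rel_mp_general ν η hmX hmY hcontr hη α hα2 D hDm hDp hDs hDb hDeq
end

section
/- Every proper open subgroup of a noncompact locally compact group with the Howe-Moore property is compact. -/
open Filter

/-- A topological group has the Howe-Moore property if every continuous unitary
representation with no nonzero invariant vectors has matrix coefficients vanishing at
infinity. -/
def HoweMoore (G : Type*) [Group G] [TopologicalSpace G] : Prop :=
  ∀ (H : Type) [NormedAddCommGroup H] [InnerProductSpace ℂ H] [CompleteSpace H]
    (π : G →* (H ≃ₗᵢ[ℂ] H)),
    (∀ v : H, Continuous fun g : G => π g v) →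
    (∀ v : H, (∀ g : G, π g v = v) → v = 0) →
    ∀ v w : H, Tendsto (fun g : G => (inner ℂ (π g v) w : ℂ)) (cocompact G) (nhds 0)

/-!
Let `G` act on the countable discrete set `G ⧸ U` and let `π` be the resulting permutation
representation on `ℓ²(G ⧸ U)`; the stabilizer of the basis vector `δ` at the coset `U` is `U`.
Subtracting from `δ` its projection onto the `π`-invariant vectors leaves a vector `w`, still
fixed by `U`, in a subrepresentation without invariant vectors, and `w ≠ 0` because `U ≠ G`.
By Howe–Moore `⟪π g w, w⟫ → 0` at infinity, whereas it equals `‖w‖² ≠ 0` on `U`; so `U` lies in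
a compact set, and it is closed, being an open subgroup.
-/

open scoped lp

noncomputable section

theorem continuous_apply_of_hasSum {X ι 𝕜 E : Type*} [TopologicalSpace X] [Semiring 𝕜]
    [SeminormedAddCommGroup E] [Module 𝕜 E] (π : X → E ≃ₗᵢ[𝕜] E) {f : ι → E} {v : E}
    (hv : HasSum f v) (hf : ∀ i, Continuous fun x => π x (f i)) :
    Continuous fun x => π x v := by
  have hunif : TendstoUniformly (fun s : Finset ι => fun x => π x (∑ i ∈ s, f i))
      (fun x => π x v) atTop := by
    refine Metric.tendstoUniformly_iff.2 fun ε hε => ?_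
    filter_upwards [Metric.tendsto_nhds.1 hv ε hε] with s hs x
    rwa [(π x).dist_map, dist_comm]
  refine hunif.continuous (Frequently.of_forall fun s => ?_)
  simpa only [map_sum] using continuous_finsetSum s fun i _ => hf i

section Permutation

variable {I 𝕜 E : Type*} [NormedField 𝕜] [NormedAddCommGroup E] [NormedSpace 𝕜 E]

theorem lp.single_left_inj {p : ENNReal} [DecidableEq I] {i j : I} {a : E} (ha : a ≠ 0) :
    lp.single (E := fun _ => E) p i a = lp.single p j a ↔ i = j := by
  refine ⟨fun h => by_contra fun hij => ha ?_, fun h => h ▸ rfl⟩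
  simpa [Pi.single_eq_of_ne hij] using congrArg (fun f : lp (fun _ => E) p => f i) h

theorem memℓp_two_comp_equiv (f : ℓ²(I, E)) (e : I ≃ I) : Memℓp (fun i => f (e i)) 2 :=
  memℓp_gen <| e.summable_iff.2 <| (lp.memℓp f).summable (by norm_num)

def lpPermHom : Equiv.Perm I →* (ℓ²(I, E) ≃ₗᵢ[𝕜] ℓ²(I, E)) where
  toFun e :=
    { toFun f := ⟨fun i => f (e.symm i), memℓp_two_comp_equiv f e.symm⟩
      invFun f := ⟨fun i => f (e i), memℓp_two_comp_equiv f e⟩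
      left_inv f := lp.ext <| funext fun i => by simp
      right_inv f := lp.ext <| funext fun i => by simp
      map_add' f g := rfl
      map_smul' c f := rfl
      norm_map' f := by
        have h2 : 0 < (2 : ENNReal).toReal := by norm_num
        simp only [lp.norm_eq_tsum_rpow h2]
        congr 1
        exact e.symm.tsum_eq fun i => ‖f i‖ ^ (2 : ENNReal).toReal }
  map_one' := rfl
  map_mul' e e' := rfl

@[simp]
theorem lpPermHom_apply_apply (e : Equiv.Perm I) (f : ℓ²(I, E)) (i : I) :
    (lpPermHom (𝕜 := 𝕜) e f : I → E) i = f (e.symm i) := rfl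

theorem lpPermHom_single [DecidableEq I] (e : Equiv.Perm I) (i : I) (a : E) :
    lpPermHom (𝕜 := 𝕜) e (lp.single 2 i a) = lp.single 2 (e i) a := by
  ext j
  simp [Pi.single_apply, e.symm_apply_eq]

end Permutation

theorem continuous_lpPermHom_comp_apply {G I : Type*} [Group G] [TopologicalSpace G]
    (ρ : G →* Equiv.Perm I) (hρ : ∀ i, IsLocallyConstant fun g => ρ g i) (v : ℓ²(I, ℂ)) :
    Continuous fun g => lpPermHom (𝕜 := ℂ) (ρ g) v := by
  classical
  refine continuous_apply_of_hasSum _ (lp.hasSum_single (by norm_num) v) fun i => ?_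
  simp only [lpPermHom_single]
  exact ((hρ i).comp fun j => lp.single 2 j (v i)).continuous

section Invariants

variable {G E : Type*} [Group G] [NormedAddCommGroup E] [InnerProductSpace ℂ E]

def invariantSubspace (π : G →* (E ≃ₗᵢ[ℂ] E)) : Submodule ℂ E where
  carrier := {v | ∀ g, π g v = v}
  add_mem' hv hw g := by rw [map_add, hv g, hw g]
  zero_mem' g := map_zero _
  smul_mem' c v hv g := by rw [map_smul, hv g]

theorem mem_invariantSubspace {π : G →* (E ≃ₗᵢ[ℂ] E)} {v : E} :
    v ∈ invariantSubspace π ↔ ∀ g, π g v = v := Iff.rfl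

theorem isClosed_invariantSubspace (π : G →* (E ≃ₗᵢ[ℂ] E)) :
    IsClosed (invariantSubspace π : Set E) := by
  have h : (invariantSubspace π : Set E) = ⋂ g, {v | π g v = v} := by
    ext v
    simp [mem_invariantSubspace]
  rw [h]
  exact isClosed_iInter fun g => isClosed_eq (π g).continuous continuous_id

theorem apply_mem_orthogonal_invariantSubspace (π : G →* (E ≃ₗᵢ[ℂ] E)) (g : G) {v : E}
    (hv : v ∈ (invariantSubspace π)ᗮ) : π g v ∈ (invariantSubspace π)ᗮ := by
  refine (Submodule.mem_orthogonal _ _).2 fun u hu => ?_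
  rw [← hu g, LinearIsometryEquiv.inner_map_map]
  exact (Submodule.mem_orthogonal _ _).1 hv u hu

def restrictRep (π : G →* (E ≃ₗᵢ[ℂ] E)) (K : Submodule ℂ E) (hK : ∀ g, ∀ v ∈ K, π g v ∈ K) :
    G →* (K ≃ₗᵢ[ℂ] K) where
  toFun g :=
    { toFun v := ⟨π g v, hK g v v.2⟩
      invFun v := ⟨π g⁻¹ v, hK g⁻¹ v v.2⟩
      left_inv v := Subtype.ext <| by simp [map_inv]
      right_inv v := Subtype.ext <| by simp [map_inv]
      map_add' v w := Subtype.ext <| map_add _ _ _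
      map_smul' c v := Subtype.ext <| map_smul _ _ _
      norm_map' v := (π g).norm_map v }
  map_one' := LinearIsometryEquiv.ext fun v => Subtype.ext <| by simp
  map_mul' g h := LinearIsometryEquiv.ext fun v => Subtype.ext <| by simp

@[simp]
theorem coe_restrictRep_apply (π : G →* (E ≃ₗᵢ[ℂ] E)) (K : Submodule ℂ E)
    (hK : ∀ g, ∀ v ∈ K, π g v ∈ K) (g : G) (v : K) :
    (restrictRep π K hK g v : E) = π g v := rfl

end Invariants

namespace HoweMoore

variable {G : Type*} [Group G] [TopologicalSpace G] {H : Type} [NormedAddCommGroup H]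
  [InnerProductSpace ℂ H] [CompleteSpace H]

theorem exists_isCompact_superset_setOf_apply_eq (hHM : HoweMoore G) (π : G →* (H ≃ₗᵢ[ℂ] H))
    (hcont : ∀ v, Continuous fun g => π g v) (hinv : ∀ v, (∀ g, π g v = v) → v = 0)
    {w : H} (hw : w ≠ 0) : ∃ K, IsCompact K ∧ {g | π g w = w} ⊆ K := by
  have hpos : 0 < ‖w‖ ^ 2 := by positivity
  obtain ⟨K, hK, hKsub⟩ := mem_cocompact.1 <|
    Metric.tendsto_nhds.1 (hHM H π hcont hinv w w) _ hpos
  refine ⟨K, hK, fun g hg => by_contra fun hgK => ?_⟩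
  have hlt := hKsub hgK
  simp only [Set.mem_ofPred_eq] at hg hlt
  rw [hg, dist_zero_right, inner_self_eq_norm_sq_to_K] at hlt
  norm_cast at hlt
  simp at hlt

theorem isCompact_setOf_apply_eq (hHM : HoweMoore G) (π : G →* (H ≃ₗᵢ[ℂ] H))
    (hcont : ∀ v, Continuous fun g => π g v) {v : H} (hv : v ∉ invariantSubspace π) :
    IsCompact {g | π g v = v} := by
  set V := invariantSubspace π
  have : CompleteSpace V := (isClosed_invariantSubspace π).completeSpace_coe
  let π' := restrictRep π Vᗮ fun g _ => apply_mem_orthogonal_invariantSubspace π g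
  let w : Vᗮ := ⟨v - V.starProjection v, V.sub_starProjection_mem_orthogonal v⟩
  have hw : w ≠ 0 := fun h => hv <| by
    rw [sub_eq_zero.1 (congrArg Subtype.val h)]
    exact V.starProjection_apply_mem v
  have hinv : ∀ x : Vᗮ, (∀ g, π' g x = x) → x = 0 := fun x hx =>
    Subtype.ext <| Submodule.disjoint_def.1 V.orthogonal_disjoint x
      (fun g => congrArg Subtype.val (hx g)) x.2
  obtain ⟨K, hK, hKsub⟩ := hHM.exists_isCompact_superset_setOf_apply_eq π'
    (fun x => (hcont x).subtype_mk _) hinv hw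
  refine hK.of_isClosed_subset (isClosed_eq (hcont v) continuous_const) fun g hg => hKsub ?_
  have hg : π g v = v := hg
  exact Subtype.ext <| by simp [π', w, hg, V.starProjection_apply_mem v g]

theorem isCompact_stabilizer (hHM : HoweMoore G) {α : Type*} [MulAction G α] [Countable α]
    (hα : ∀ a : α, IsLocallyConstant fun g : G => g • a) {a : α} (ha : ∃ g : G, g • a ≠ a) :
    IsCompact (MulAction.stabilizer G a : Set G) := by
  classical
  -- `HoweMoore` only speaks of Hilbert spaces in `Type`, hence `ℓ²` of `Shrink α`.
  let e := equivShrink.{0} α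
  let π : G →* (ℓ²(Shrink.{0} α, ℂ) ≃ₗᵢ[ℂ] ℓ²(Shrink.{0} α, ℂ)) :=
    lpPermHom.comp <| e.permCongrHom.toMonoidHom.comp (MulAction.toPermHom G α)
  set δ : ℓ²(Shrink.{0} α, ℂ) := lp.single 2 (e a) 1
  have hstab : ∀ g, π g δ = δ ↔ g • a = a := fun g => by
    have hπ : π g δ = lp.single 2 (e (g • a)) 1 := by simp [π, δ, lpPermHom_single]
    rw [hπ, lp.single_left_inj one_ne_zero, e.injective.eq_iff]
  have hcont : ∀ v, Continuous fun g => π g v :=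
    continuous_lpPermHom_comp_apply _ fun i => (hα (e.symm i)).comp e
  obtain ⟨g, hg⟩ := ha
  rw [show (MulAction.stabilizer G a : Set G) = {g | π g δ = δ} from
    Set.ext fun g => (hstab g).symm]
  exact hHM.isCompact_setOf_apply_eq π hcont fun h => hg ((hstab g).1 (h g))

end HoweMoore

end

theorem proper_open_subgroup_compact_general {G : Type*} [Group G] [TopologicalSpace G]
    [IsTopologicalGroup G] [SecondCountableTopology G]
    (hHM : HoweMoore G)
    (U : Subgroup G) (hUo : IsOpen (U : Set G)) (hUp : U ≠ ⊤) :
    IsCompact (U : Set G) := by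
  have : DiscreteTopology (G ⧸ U) := QuotientGroup.discreteTopology hUo
  have : Countable (G ⧸ U) := TopologicalSpace.separableSpace_iff_countable.1 inferInstance
  obtain ⟨g, hg⟩ : ∃ g, g ∉ U := by simpa [Subgroup.eq_top_iff'] using hUp
  rw [← MulAction.stabilizer_quotient U]
  refine hHM.isCompact_stabilizer
    (fun q => (IsLocallyConstant.iff_continuous _).2 (continuous_id.smul continuous_const)) ⟨g, ?_⟩
  simpa [QuotientGroup.eq] using hg

/-- Every proper open subgroup of a noncompact locally compact group with the Howe-Moore
property is compact. -/
theorem proper_open_subgroup_compact {G : Type*} [Group G] [TopologicalSpace G]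
    [IsTopologicalGroup G] [LocallyCompactSpace G] [SecondCountableTopology G]
    (hnc : ¬ CompactSpace G) (hHM : HoweMoore G)
    (U : Subgroup G) (hUo : IsOpen (U : Set G)) (hUp : U ≠ ⊤) :
    IsCompact (U : Set G) :=
  proper_open_subgroup_compact_general hHM U hUo hUp
end
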